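/- arXiv:2510.00250 — 4 statements merged into one kernel-verified Lean document; each statement's English description precedes it below -/
import Mathlib

section
/- Let v, w ∈ S_n such that there are no unexpected zeros, i.e., for every (i,j) ∈ D°(v) one has t_{v(j),i}·v ≤ w in Bruhat order. Then the graph G_{v,w} contains a cycle (in its underlying undirected graph) if and only if there exist (i,j), (k,l) ∈ D°(v) with i < k and j < l. -/
/-- The Coxeter length of a permutation: its number of inversions. -/
def coxeterLength {n : ℕ} (w : Equiv.Perm (Fin n)) : ℕ :=
  (Finset.univ.filter fun p : Fin n × Fin n => p.1 < p.2 ∧ w p.2 < w p.1).card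

/-- A simple reflection `s_i = t_{i,i+1}`. -/
def IsSimpleRefl {n : ℕ} (x : Equiv.Perm (Fin n)) : Prop :=
  ∃ (i : Fin n) (h : (i : ℕ) + 1 < n), x = Equiv.swap i ⟨(i : ℕ) + 1, h⟩

/-- `l` is a reduced word for `w`. -/
def IsReducedWord {n : ℕ} (w : Equiv.Perm (Fin n)) (l : List (Equiv.Perm (Fin n))) : Prop :=
  (∀ x ∈ l, IsSimpleRefl x) ∧ l.prod = w ∧ l.length = coxeterLength w

/-- The Bruhat order via the subword property. -/
def BruhatLE {n : ℕ} (v w : Equiv.Perm (Fin n)) : Prop :=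
  ∃ lw lv : List (Equiv.Perm (Fin n)),
    IsReducedWord w lw ∧ IsReducedWord v lv ∧ lv.Sublist lw

/-- Membership `(i,j) ∈ D°(v)`. -/
def InOppRothe {n : ℕ} (v : Equiv.Perm (Fin n)) (i j : Fin n) : Prop :=
  v j < i ∧ j < v.symm i

/-- The (underlying undirected simple graph of the) graph `G_{v,w}` with an edge
`v(j) — i` for each `(i,j) ∈ D°(v)` with `t_{v(j),i}·v ≤ w`; here, assuming no
unexpected zeros, every `(i,j) ∈ D°(v)` contributes its edge. -/
def GvwGraph {n : ℕ} (v : Equiv.Perm (Fin n)) : SimpleGraph (Fin n) :=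
  SimpleGraph.fromEdgeSet {e | ∃ i j : Fin n, InOppRothe v i j ∧ e = s(v j, i)}

/-!
Read on values, `GvwGraph v` joins `x < y` exactly when `v⁻¹ x < v⁻¹ y`, and a cell
`(i, j) ∈ D°(v)` is an edge `v j — i` with `v j < i`. Two cells `(i, j)`, `(k, l)` with
`i < k`, `j < l` give a triangle or a 4-cycle on `v j, i, v l, k`. Conversely, let `M` be
the largest vertex of a cycle and `a`, `b` its neighbours on the cycle, with `v⁻¹ a < v⁻¹ b`;
the other cycle neighbour `q` of `a` is also below `M`, and the edge `a — q` with the edge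
`b — M` gives two such cells.
-/

namespace SimpleGraph

variable {V : Type*} {G : SimpleGraph V}

theorem Walk.IsCycle.exists_ne_adj_toSubgraph {r u : V} {c : G.Walk r r} (hc : c.IsCycle)
    (hu : u ∈ c.support) :
    ∃ x y, x ≠ y ∧ c.toSubgraph.Adj u x ∧ c.toSubgraph.Adj u y := by
  obtain ⟨x, y, hxy, hN⟩ := Set.ncard_eq_two.mp (hc.ncard_neighborSet_toSubgraph_eq_two hu)
  have hx : x ∈ c.toSubgraph.neighborSet u := hN ▸ Set.mem_insert x {y}
  have hy : y ∈ c.toSubgraph.neighborSet u := hN ▸ Set.mem_insert_of_mem x rfl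
  exact ⟨x, y, hxy, hx, hy⟩

theorem exists_lt_adj_of_not_isAcyclic [LinearOrder V] (h : ¬G.IsAcyclic) :
    ∃ M a b, a ≠ b ∧ a < M ∧ b < M ∧ G.Adj M a ∧ G.Adj M b ∧
      (∃ q < M, G.Adj a q) ∧ (∃ q < M, G.Adj b q) := by
  classical
  obtain ⟨r, c, hc⟩ : ∃ r, ∃ c : G.Walk r r, c.IsCycle := by simpa [IsAcyclic] using h
  have hS : c.support.toFinset.Nonempty := ⟨r, by simp⟩
  set M := c.support.toFinset.max' hS
  have lt_M {x y : V} (hxy : c.toSubgraph.Adj x y) (hy : y ≠ M) : y < M :=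
    (c.support.toFinset.le_max' y
      (by simpa using Walk.mem_support_of_adj_toSubgraph hxy.symm)).lt_of_ne hy
  have lower_adj {a : V} (ha : c.toSubgraph.Adj M a) : ∃ q < M, G.Adj a q := by
    obtain ⟨x, y, hxy, hx, hy⟩ :=
      hc.exists_ne_adj_toSubgraph (Walk.mem_support_of_adj_toSubgraph ha.symm)
    by_cases hxM : x = M
    · exact ⟨y, lt_M hy (hxM ▸ hxy.symm), hy.adj_sub⟩
    · exact ⟨x, lt_M hx hxM, hx.adj_sub⟩
  obtain ⟨a, b, hab, ha, hb⟩ :=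
    hc.exists_ne_adj_toSubgraph (by simpa using c.support.toFinset.max'_mem hS)
  exact ⟨M, a, b, hab, lt_M ha ha.adj_sub.ne', lt_M hb hb.adj_sub.ne', ha.adj_sub, hb.adj_sub,
    lower_adj ha, lower_adj hb⟩

theorem not_isAcyclic_of_adj_of_isPath {u w : V} (huw : G.Adj u w) (p : G.Walk u w)
    (hp : p.IsPath) (hlen : 2 ≤ p.length) : ¬G.IsAcyclic := fun hG => by
  have : p.length = 1 := congrArg (fun q : G.Path u w => q.1.length)
    ((hG.subsingleton_path u w).elim ⟨p, hp⟩ (Path.singleton huw))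
  omega

end SimpleGraph

open SimpleGraph

section GvwGraph

variable {n : ℕ} (v : Equiv.Perm (Fin n))

theorem gvwGraph_adj_iff_of_lt {x y : Fin n} (hxy : x < y) :
    (GvwGraph v).Adj x y ↔ v.symm x < v.symm y := by
  simp only [GvwGraph, fromEdgeSet_adj, Set.mem_ofPred_eq, InOppRothe, Sym2.eq_iff]
  constructor
  · rintro ⟨⟨i, j, ⟨hji, hj⟩, ⟨rfl, rfl⟩ | ⟨rfl, rfl⟩⟩, -⟩
    · simpa using hj
    · exact (lt_asymm hji hxy).elim
  · exact fun h => ⟨⟨y, v.symm x, ⟨by simpa using hxy, h⟩, by simp⟩, hxy.ne⟩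

theorem inOppRothe_symm_iff {a i : Fin n} :
    InOppRothe v i (v.symm a) ↔ a < i ∧ (GvwGraph v).Adj a i := by
  simp only [InOppRothe, Equiv.apply_symm_apply]
  exact and_congr_right fun hai => (gvwGraph_adj_iff_of_lt v hai).symm

theorem exists_inOppRothe_of_not_isAcyclic (h : ¬(GvwGraph v).IsAcyclic) :
    ∃ i j k l : Fin n, InOppRothe v i j ∧ InOppRothe v k l ∧ i < k ∧ j < l := by
  obtain ⟨M, a, b, hab, haM, hbM, hMa, hMb, ⟨qa, hqaM, haqa⟩, ⟨qb, hqbM, hbqb⟩⟩ :=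
    exists_lt_adj_of_not_isAcyclic h
  wlog hpos : v.symm a < v.symm b generalizing a b qa qb
  · exact this b a hab.symm hbM haM hMb hMa qb hqbM hbqb qa hqaM haqa
      ((not_lt.mp hpos).lt_of_ne (v.symm.injective.ne hab.symm))
  have hbM' : InOppRothe v M (v.symm b) := (inOppRothe_symm_iff v).mpr ⟨hbM, hMb.symm⟩
  rcases lt_or_gt_of_ne haqa.ne with hlt | hgt
  · exact ⟨qa, v.symm a, M, v.symm b, (inOppRothe_symm_iff v).mpr ⟨hlt, haqa⟩, hbM', hqaM,
      hpos⟩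
  · have hpos' : v.symm qa < v.symm a := (gvwGraph_adj_iff_of_lt v hgt).mp haqa.symm
    exact ⟨a, v.symm qa, M, v.symm b, (inOppRothe_symm_iff v).mpr ⟨hgt, haqa.symm⟩, hbM', haM,
      hpos'.trans hpos⟩

theorem not_isAcyclic_of_inOppRothe {i j k l : Fin n} (hij : InOppRothe v i j)
    (hkl : InOppRothe v k l) (hik : i < k) (hjl : j < l) : ¬(GvwGraph v).IsAcyclic := by
  have adj {x y : Fin n} (hxy : x < y) (h : v.symm x < v.symm y) : (GvwGraph v).Adj x y :=
    (gvwGraph_adj_iff_of_lt v hxy).mpr h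
  obtain ⟨a, rfl⟩ := v.symm.surjective j
  obtain ⟨c, rfl⟩ := v.symm.surjective l
  obtain ⟨hai, hai'⟩ := (inOppRothe_symm_iff v).mp hij
  obtain ⟨hck, hck'⟩ := (inOppRothe_symm_iff v).mp hkl
  have hak : (GvwGraph v).Adj a k := adj (hai.trans hik) (hjl.trans hkl.2)
  have hac : a ≠ c := fun h => hjl.ne (congrArg v.symm h)
  rcases lt_or_gt_of_ne (v.symm.injective.ne hik.ne) with hik' | hki'
  · refine not_isAcyclic_of_adj_of_isPath hak (.cons hai' (.cons (adj hik hik') .nil)) ?_ le_rfl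
    simp [Walk.cons_isPath_iff, hai.ne, (hai.trans hik).ne, hik.ne]
  · have hci : c ≠ i := fun h => (hkl.2.trans hki').ne (congrArg v.symm h)
    rcases lt_or_gt_of_ne hci with hci' | hic
    · refine not_isAcyclic_of_adj_of_isPath hak
        (.cons hai' (.cons (adj hci' (hkl.2.trans hki')).symm (.cons hck' .nil))) ?_ (by simp)
      simp [Walk.cons_isPath_iff, hai.ne, (hai.trans hik).ne, hik.ne, hac, hci'.ne', hck.ne]
    · refine not_isAcyclic_of_adj_of_isPath hak
        (.cons (adj (hai.trans hic) hjl) (.cons hck' .nil)) ?_ le_rfl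
      simp [Walk.cons_isPath_iff, hac, (hai.trans hik).ne, hck.ne]

end GvwGraph

theorem contains_cycle_iff_general (n : ℕ) (v : Equiv.Perm (Fin n)) :
    ¬ (GvwGraph v).IsAcyclic ↔
      ∃ i j k l : Fin n, InOppRothe v i j ∧ InOppRothe v k l ∧ i < k ∧ j < l :=
  ⟨exists_inOppRothe_of_not_isAcyclic v,
    fun ⟨_, _, _, _, hij, hkl, hik, hjl⟩ => not_isAcyclic_of_inOppRothe v hij hkl hik hjl⟩

/-- Suppose there are no unexpected zeros, i.e. `t_{v(j),i}·v ≤ w` for every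
`(i,j) ∈ D°(v)`. Then `G_{v,w}` contains a cycle (in its underlying undirected
graph) iff there exist `(i,j), (k,l) ∈ D°(v)` with `i < k` and `j < l`. -/
theorem contains_cycle_iff (n : ℕ) (v w : Equiv.Perm (Fin n))
    (hno : ∀ i j : Fin n, InOppRothe v i j → BruhatLE (Equiv.swap (v j) i * v) w) :
    ¬ (GvwGraph v).IsAcyclic ↔
      ∃ i j k l : Fin n, InOppRothe v i j ∧ InOppRothe v k l ∧ i < k ∧ j < l :=
  contains_cycle_iff_general n v
end

section
/- Let v ∈ S_n. Then the number of isolated vertices of the graph whose edges are v(j) → i for (i,j) ∈ D°(v) equals the number of indices i ∈ [n] with v(i) = n − i + 1 such that neither row n−i+1 nor column i meets D°(v); i.e. #{i ∈ [n] : v(i)=n−i+1, ∀j: (j,i) ∉ D°(v) and (n−i+1,j) ∉ D°(v)}. -/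
/-!
Reindex the vertices as `a = v i`. The vertex `v i` is isolated exactly when column `i` and
row `v i` miss `D°(v)`. An empty row says that `v` sends every `q < i` above `v i`, an empty
column that every value above `v i` comes from some `q < i`; so `v` restricts to a bijection
`Iio i ≃ Ioi (v i)`, and counting gives `i = n - 1 - v i`, i.e. `v i = i.rev`.
-/

open Finset

instance {n : ℕ} (v : Equiv.Perm (Fin n)) (i j : Fin n) :
    Decidable (InOppRothe v i j) :=
  inferInstanceAs (Decidable (v j < i ∧ j < v.symm i))

theorem Fin.eq_rev_of_card_Iio_eq_card_Ioi {n : ℕ} {i j : Fin n} (h : #(Iio i) = #(Ioi j)) :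
    j = i.rev := by
  rw [Fin.card_Iio, Fin.card_Ioi] at h
  ext
  rw [Fin.val_rev]
  omega

namespace InOppRothe

variable {n : ℕ} (v : Equiv.Perm (Fin n))

/-- `a` is neither the tail `v j` nor the head `i` of an edge `v j → i` of the graph. -/
def IsIsolated (a : Fin n) : Prop :=
  ∀ i j : Fin n, InOppRothe v i j → a ≠ v j ∧ a ≠ i

variable {v}

theorem isIsolated_apply_iff {i : Fin n} :
    IsIsolated v (v i) ↔ (∀ j, ¬ InOppRothe v j i) ∧ ∀ j, ¬ InOppRothe v (v i) j := by
  refine ⟨fun h => ⟨fun j hj => (h j i hj).1 rfl, fun j hj => (h (v i) j hj).2 rfl⟩, ?_⟩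
  rintro ⟨hcol, hrow⟩ p q hpq
  exact ⟨fun hiq => hcol p (v.injective hiq ▸ hpq), fun hip => hrow q (hip ▸ hpq)⟩

theorem lt_apply_of_row_empty {i : Fin n} (hrow : ∀ j, ¬ InOppRothe v (v i) j) {q : Fin n}
    (hq : q < i) : v i < v q := by
  refine lt_of_le_of_ne (not_lt.1 fun hlt => hrow q ⟨hlt, by simpa using hq⟩) fun h => ?_
  exact hq.ne' (v.injective h)

theorem symm_lt_of_col_empty {i : Fin n} (hcol : ∀ j, ¬ InOppRothe v j i) {p : Fin n}
    (hp : v i < p) : v.symm p < i := by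
  refine lt_of_le_of_ne (not_lt.1 fun hlt => hcol p ⟨hp, hlt⟩) fun h => ?_
  exact hp.ne (by simp [← h])

theorem apply_eq_rev_of_row_col_empty {i : Fin n} (hcol : ∀ j, ¬ InOppRothe v j i)
    (hrow : ∀ j, ¬ InOppRothe v (v i) j) : v i = i.rev := by
  refine Fin.eq_rev_of_card_Iio_eq_card_Ioi <|
    card_nbij' v v.symm ?_ ?_ (fun _ _ => v.symm_apply_apply _) (fun _ _ => v.apply_symm_apply _)
  · intro q hq
    simpa using lt_apply_of_row_empty hrow (by simpa using hq)
  · intro p hp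
    simpa using symm_lt_of_col_empty hcol (by simpa using hp)

theorem isIsolated_apply_iff_eq_rev {i : Fin n} :
    IsIsolated v (v i) ↔
      v i = i.rev ∧ ∀ j, ¬ InOppRothe v j i ∧ ¬ InOppRothe v i.rev j := by
  rw [isIsolated_apply_iff]
  constructor
  · rintro ⟨hcol, hrow⟩
    have hrev := apply_eq_rev_of_row_col_empty hcol hrow
    exact ⟨hrev, fun j => ⟨hcol j, hrev ▸ hrow j⟩⟩
  · rintro ⟨hrev, h⟩
    exact ⟨fun j => (h j).1, fun j => hrev ▸ (h j).2⟩

end InOppRothe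

/-- The number of isolated vertices of the graph with an edge `v(j) → i` for each
`(i,j) ∈ D°(v)` equals the number of `1`s on the antidiagonal of `v` (positions `i`
with `v(i) = n − i + 1`, i.e. `v i = i.rev` in 0-indexed terms) whose row and column
do not meet `D°(v)`. -/
theorem isolated_vertices_count (n : ℕ) (v : Equiv.Perm (Fin n)) :
    (Finset.univ.filter fun a : Fin n =>
        ∀ i j : Fin n, InOppRothe v i j → a ≠ v j ∧ a ≠ i).card
      = (Finset.univ.filter fun i : Fin n =>
          v i = i.rev ∧ ∀ j : Fin n, ¬ InOppRothe v j i ∧ ¬ InOppRothe v i.rev j).card :=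
  card_equiv v.symm fun a => by
    simpa [InOppRothe.IsIsolated] using
      InOppRothe.isIsolated_apply_iff_eq_rev (v := v) (i := v.symm a)
end

section
/- Let v ∈ S_n and consider the graph G on vertex set [n] with an edge v(j) → i for each (i,j) ∈ D°(v). Then the number of connected components of G having more than one vertex equals the cardinality of the set C_v = {(i,j) ∈ D°(v) : for all i' > i, (i',j) ∉ D°(v), and for all j' < j, (i,j') ∉ D°(v)} of southwest corners of D°(v). -/
/-- The (underlying undirected simple graph of the) graph on `[n]` with an edge
`v(j) — i` for each `(i,j) ∈ D°(v)`. -/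
def rotheGraph {n : ℕ} (v : Equiv.Perm (Fin n)) : SimpleGraph (Fin n) :=
  SimpleGraph.fromEdgeSet {e | ∃ i j : Fin n, InOppRothe v i j ∧ e = s(v j, i)}

lemma rothe_adj {n : ℕ} (v : Equiv.Perm (Fin n)) (a b : Fin n) :
    (rotheGraph v).Adj a b ↔
      (a < b ∧ v.symm a < v.symm b) ∨ (b < a ∧ v.symm b < v.symm a) := by
  rw [rotheGraph, SimpleGraph.fromEdgeSet_adj]
  constructor
  · rintro ⟨⟨i, j, hij, he⟩, hne⟩
    rw [Sym2.eq_iff] at he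
    rcases he with ⟨ha, hb⟩ | ⟨ha, hb⟩
    · subst ha; subst hb
      exact Or.inl ⟨hij.1, by simpa using hij.2⟩
    · subst ha; subst hb
      exact Or.inr ⟨hij.1, by simpa using hij.2⟩
  · rintro (⟨h1, h2⟩ | ⟨h1, h2⟩)
    · exact ⟨⟨b, v.symm a, ⟨by simpa using h1, by simpa using h2⟩, by simp⟩, h1.ne⟩
    · exact ⟨⟨a, v.symm b, ⟨by simpa using h1, by simpa using h2⟩,
        by simp [Sym2.eq_swap]⟩, h1.ne'⟩

lemma corner_adj {n : ℕ} (v : Equiv.Perm (Fin n)) {i j : Fin n}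
    (h : InOppRothe v i j) : (rotheGraph v).Adj (v j) i := by
  rw [rothe_adj]
  exact Or.inl ⟨h.1, by simpa using h.2⟩

lemma reachable_closed {V : Type*} {G : SimpleGraph V} {S : Set V}
    (hS : ∀ a b, G.Adj a b → a ∈ S → b ∈ S) {x y : V} (h : G.Reachable x y) :
    x ∈ S → y ∈ S := by
  obtain ⟨w⟩ := h
  induction w with
  | nil => exact id
  | cons h p ih => exact fun hx => ih (hS _ _ h hx)

/-- The cut lemma: everything reachable from the vertex `i` of a SW corner `(i,j)`
is `≤ i` in value and at position `≥ j`. -/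
lemma corner_cut {n : ℕ} (v : Equiv.Perm (Fin n)) {i j : Fin n}
    (h1 : InOppRothe v i j)
    (h2 : ∀ i', i < i' → ¬ InOppRothe v i' j)
    (h3 : ∀ j', j' < j → ¬ InOppRothe v i j')
    {x : Fin n} (hx : (rotheGraph v).Reachable i x) :
    x ≤ i ∧ j ≤ v.symm x := by
  refine reachable_closed (S := {x | x ≤ i ∧ j ≤ v.symm x}) ?_ hx
    ⟨le_refl _, le_of_lt h1.2⟩
  rintro a b hab ⟨hai, hja⟩
  rw [rothe_adj] at hab
  rcases hab with ⟨hv, hp⟩ | ⟨hv, hp⟩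
  · constructor
    · by_contra hbig
      push_neg at hbig
      exact h2 b hbig ⟨lt_trans h1.1 hbig, lt_of_le_of_lt hja hp⟩
    · exact le_of_lt (lt_of_le_of_lt hja hp)
  · refine ⟨le_of_lt (lt_of_lt_of_le hv hai), ?_⟩
    by_contra hsmall
    push_neg at hsmall
    refine h3 (v.symm b) hsmall ⟨?_, lt_trans hsmall h1.2⟩
    simpa using lt_of_lt_of_le hv hai
/-- The number of connected components of the graph having more than one vertex
equals the number of southwest corners of `D°(v)`. -/
theorem components_eq_sw_corners (n : ℕ) (v : Equiv.Perm (Fin n)) :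
    Nat.card {c : (rotheGraph v).ConnectedComponent //
        ∃ a b : Fin n, a ≠ b ∧ (rotheGraph v).connectedComponentMk a = c ∧
          (rotheGraph v).connectedComponentMk b = c}
      = (Finset.univ.filter fun p : Fin n × Fin n =>
          InOppRothe v p.1 p.2 ∧
          (∀ i' : Fin n, p.1 < i' → ¬ InOppRothe v i' p.2) ∧
          (∀ j' : Fin n, j' < p.2 → ¬ InOppRothe v p.1 j')).card := by
  classical
  set mk := (rotheGraph v).connectedComponentMk with hmk
  set P : Fin n × Fin n → Prop := fun p =>
    InOppRothe v p.1 p.2 ∧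
    (∀ i' : Fin n, p.1 < i' → ¬ InOppRothe v i' p.2) ∧
    (∀ j' : Fin n, j' < p.2 → ¬ InOppRothe v p.1 j') with hP
  set NT : (rotheGraph v).ConnectedComponent → Prop := fun c =>
    ∃ a b : Fin n, a ≠ b ∧ mk a = c ∧ mk b = c with hNT
  have hfv : ∀ p : {p : Fin n × Fin n // P p}, NT (mk p.1.1) := by
    rintro ⟨⟨i, j⟩, hp⟩
    exact ⟨v j, i, (corner_adj v hp.1).ne,
      SimpleGraph.ConnectedComponent.sound (corner_adj v hp.1).reachable, rfl⟩
  set f : {p : Fin n × Fin n // P p} → {c : (rotheGraph v).ConnectedComponent // NT c} :=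
    fun p => ⟨mk p.1.1, hfv p⟩ with hfdef
  have finj : Function.Injective f := by
    rintro ⟨⟨i, j⟩, h⟩ ⟨⟨i', j'⟩, h'⟩ heq
    have hcc : mk i = mk i' := congrArg Subtype.val heq
    have hr : (rotheGraph v).Reachable i i' :=
      SimpleGraph.ConnectedComponent.exact hcc
    have c1 := corner_cut v h.1 h.2.1 h.2.2 hr
    have c2 := corner_cut v h'.1 h'.2.1 h'.2.2 hr.symm
    have hii : i = i' := le_antisymm c2.1 c1.1
    subst hii
    have hrj : (rotheGraph v).Reachable i (v j) :=
      ((corner_adj v h.1).reachable).symm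
    have hrj' : (rotheGraph v).Reachable i (v j') :=
      ((corner_adj v h'.1).reachable).symm
    have d1 := corner_cut v h'.1 h'.2.1 h'.2.2 hrj
    have d2 := corner_cut v h.1 h.2.1 h.2.2 hrj'
    have hjj : j = j' := by
      have e1 : j' ≤ j := by simpa using d1.2
      have e2 : j ≤ j' := by simpa using d2.2
      exact le_antisymm e2 e1
    subst hjj
    rfl
  have fsurj : Function.Surjective f := by
    rintro ⟨c, a, b, hab, ha, hb⟩
    set S : Finset (Fin n) := Finset.univ.filter (fun x => mk x = c) with hS
    have memS : ∀ x, mk x = c → x ∈ S := fun x hx => by simp [hS, hx]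
    have memS' : ∀ x ∈ S, mk x = c := fun x hx => (Finset.mem_filter.mp hx).2
    have hSne : S.Nonempty := ⟨a, memS a ha⟩
    set i := S.max' hSne with hi
    have hic : mk i = c := memS' _ (S.max'_mem hSne)
    have hle : ∀ x ∈ S, x ≤ i := fun x hx => S.le_max' x hx
    set T := S.image v.symm with hT
    have hTne : T.Nonempty := hSne.image _
    set j := T.min' hTne with hj
    obtain ⟨y, hyS, hyj⟩ := Finset.mem_image.mp (T.min'_mem hTne)
    have hjle : ∀ x ∈ S, j ≤ v.symm x := fun x hx =>
      T.min'_le _ (Finset.mem_image_of_mem _ hx)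
    -- i has a neighbor
    have hnbr : ∃ u, (rotheGraph v).Adj i u := by
      have hz : ∃ z, z ≠ i ∧ mk z = c := by
        by_cases hai : a = i
        · exact ⟨b, fun hbi => hab (hai.trans hbi.symm), hb⟩
        · exact ⟨a, hai, ha⟩
      obtain ⟨z, hzi, hzc⟩ := hz
      have hr : (rotheGraph v).Reachable i z :=
        SimpleGraph.ConnectedComponent.exact (hic.trans hzc.symm)
      obtain ⟨w⟩ := hr
      cases w with
      | nil => exact absurd rfl hzi
      | cons hadj p => exact ⟨_, hadj⟩
    obtain ⟨u, hu⟩ := hnbr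
    have huS : u ∈ S := memS u
      (((SimpleGraph.ConnectedComponent.sound hu.reachable).symm).trans hic)
    have hui : u < i := lt_of_le_of_ne (hle u huS) hu.ne'
    have hpos : v.symm u < v.symm i := by
      rcases (rothe_adj v i u).mp hu with ⟨h1, _⟩ | ⟨_, h2⟩
      · exact absurd h1 (not_lt.mpr hui.le)
      · exact h2
    have hjvi : j < v.symm i := lt_of_le_of_lt (hjle u huS) hpos
    have hyi : y < i := by
      refine lt_of_le_of_ne (hle y hyS) ?_
      rintro rfl
      rw [hyj] at hjvi
      exact lt_irrefl _ hjvi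
    have hvj : v j = y := by rw [hj, ← hyj]; simp
    have h1 : InOppRothe v i j := ⟨by rw [hvj]; exact hyi, hjvi⟩
    have h2 : ∀ i' : Fin n, i < i' → ¬ InOppRothe v i' j := by
      intro i' hii' hcon
      have hadj : (rotheGraph v).Adj (v j) i' := corner_adj v hcon
      have hyc : mk y = c := memS' y hyS
      have : i' ∈ S := memS i'
        (((SimpleGraph.ConnectedComponent.sound hadj.reachable).symm).trans
          (by rwa [hvj]))
      exact absurd (hle i' this) (not_le.mpr hii')
    have h3 : ∀ j' : Fin n, j' < j → ¬ InOppRothe v i j' := by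
      intro j' hj' hcon
      have hadj : (rotheGraph v).Adj (v j') i := corner_adj v hcon
      have hvS : v j' ∈ S := memS _
        ((SimpleGraph.ConnectedComponent.sound hadj.reachable).trans hic)
      have := hjle _ hvS
      simp only [Equiv.symm_apply_apply] at this
      exact absurd this (not_le.mpr hj')
    refine ⟨⟨(i, j), ⟨h1, h2, h3⟩⟩, ?_⟩
    exact Subtype.ext hic
  have hcard := Nat.card_eq_of_bijective f ⟨finj, fsurj⟩
  rw [← hcard, Nat.card_eq_fintype_card, Fintype.card_subtype]
end

section
/- Let v ∈ S_n, and let (i,j) ∈ D°(v). Left multiplication of v by the transposition t_{v(j),i} satisfies: for any a,b ∈ [n], r_{t_{v(j),i}v}(a,b) = r_v(a,b) + 1 if i ≥ a, j ≤ b, v(j) < a, and v⁻¹(i) > b; otherwise r_{t_{v(j),i}v}(a,b) = r_v(a,b). -/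
/-- `r_u(a,b) = #{q ≤ b : u(q) ≥ a}`, the rank of the southwest submatrix. -/
def rk {n : ℕ} (u : Equiv.Perm (Fin n)) (a b : Fin n) : ℕ :=
  (Finset.univ.filter fun q : Fin n => q ≤ b ∧ a ≤ u q).card

/-- For `(i,j) ∈ D°(v)`, left multiplication by the transposition `t_{v(j),i}` raises
`r_v(a,b)` by one exactly when `i ≥ a`, `j ≤ b`, `v(j) < a` and `v⁻¹(i) > b`, and
leaves it unchanged otherwise. -/
theorem rank_change_transposition (n : ℕ) (v : Equiv.Perm (Fin n)) (i j : Fin n)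
    (hD : InOppRothe v i j) (a b : Fin n) :
    rk (Equiv.swap (v j) i * v) a b =
      if a ≤ i ∧ j ≤ b ∧ v j < a ∧ b < v.symm i then rk v a b + 1 else rk v a b := by
  classical
  obtain ⟨h1, h2⟩ := hD
  set u := Equiv.swap (v j) i * v with hu
  have hji : j ≠ v.symm i := ne_of_lt h2
  have huj : u j = i := by
    simp [hu, Equiv.Perm.mul_apply, Equiv.swap_apply_left]
  have hvi : v (v.symm i) = i := v.apply_symm_apply i
  have hui : u (v.symm i) = v j := by
    simp [hu, Equiv.Perm.mul_apply, hvi, Equiv.swap_apply_right]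
  have huq : ∀ q : Fin n, q ≠ j → q ≠ v.symm i → u q = v q := by
    intro q hq1 hq2
    have : v q ≠ v j := fun h => hq1 (v.injective h)
    have h2' : v q ≠ i := by
      intro h
      exact hq2 (by rw [← h]; simp)
    simp [hu, Equiv.Perm.mul_apply, Equiv.swap_apply_of_ne_of_ne this h2']
  set S : Finset (Fin n) := Finset.univ \ {j, v.symm i} with hS
  have hjS : j ∉ insert (v.symm i) S := by
    simp [hS, hji]
  have hiS : v.symm i ∉ S := by simp [hS]
  have huniv : (Finset.univ : Finset (Fin n)) = insert j (insert (v.symm i) S) := by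
    ext q
    simp [hS]
    tauto
  have hsum : ∀ w : Equiv.Perm (Fin n),
      rk w a b = (if j ≤ b ∧ a ≤ w j then 1 else 0) +
        ((if v.symm i ≤ b ∧ a ≤ w (v.symm i) then 1 else 0) +
          ∑ q ∈ S, (if q ≤ b ∧ a ≤ w q then 1 else 0)) := by
    intro w
    rw [rk, Finset.card_filter, huniv, Finset.sum_insert hjS, Finset.sum_insert hiS]
  rw [hsum u, hsum v, huj, hui]
  have heq : ∑ q ∈ S, (if q ≤ b ∧ a ≤ u q then 1 else 0) =
      ∑ q ∈ S, (if q ≤ b ∧ a ≤ v q then 1 else 0) := by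
    apply Finset.sum_congr rfl
    intro q hq
    simp only [hS, Finset.mem_sdiff, Finset.mem_insert, Finset.mem_singleton] at hq
    rw [huq q (fun h => hq.2 (Or.inl h)) (fun h => hq.2 (Or.inr h))]
  rw [heq]
  simp only [Fin.le_def, Fin.lt_def] at *
  split_ifs <;> omega
end
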